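/- (Pressure initial condition for the insulating Taylor–Green vortex, Appendix C.) Let C ∈ ℝ and define p : ℝ³ → ℝ by p(x, y, z) = C + (1/16)(cos 2x + cos 2y)(2 + cos 2z) + (1/16)(cos 4x + cos 4y)(2 − cos 4z). Then for all (x, y, z) ∈ ℝ³, Δp(x, y, z) = −cos²(z)(cos 2x + cos 2y) − 4 sin²(2z)(cos 4x + cos 4y). Moreover, with the insulating Taylor–Green fields v = (sin x cos y cos z, −cos x sin y cos z, 0) and B = (cos 2x sin 2y sin 2z, −sin 2x cos 2y sin 2z, 0), this right-hand side equals −[(∂ₓv₁)² + (∂_yv₂)² + 2(∂ₓv₂)(∂_yv₁)] + [(∂ₓB₁)² + (∂_yB₂)² + 2(∂ₓB₂)(∂_yB₁)]; that is, p solves the incompressible pressure Poisson equation for this data. -/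

import Mathlib

/-!
Each slice of `p` in a single coordinate is a constant plus a combination of `cos (a s)`,
so the Laplacian just multiplies each cosine mode by `-a²`; the half-angle formulas
`1 + cos 2z = 2 cos² z` and `1 - cos 4z = 2 sin² 2z` then give the stated right-hand side.
On the other side, both quadratic expressions in the field gradients reduce to
`cos² a cos² b - sin² a sin² b = (cos 2a + cos 2b) / 2`, with `(a, b) = (x, y)` for `v`
and `(2x, 2y)` for `B`.
-/

open Real

/-- The insulating Taylor–Green pressure candidate. -/
noncomputable def tgvPressure (C : ℝ) (x y z : ℝ) : ℝ :=
  C + (1/16) * (Real.cos (2*x) + Real.cos (2*y)) * (2 + Real.cos (2*z))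
    + (1/16) * (Real.cos (4*x) + Real.cos (4*y)) * (2 - Real.cos (4*z))

/-- First component of the insulating Taylor–Green velocity field. -/
noncomputable def tgvV1 (x y z : ℝ) : ℝ := Real.sin x * Real.cos y * Real.cos z

/-- Second component of the insulating Taylor–Green velocity field. -/
noncomputable def tgvV2 (x y z : ℝ) : ℝ := -(Real.cos x * Real.sin y * Real.cos z)

/-- First component of the insulating Taylor–Green magnetic field. -/
noncomputable def tgvB1 (x y z : ℝ) : ℝ := Real.cos (2*x) * Real.sin (2*y) * Real.sin (2*z)

/-- Second component of the insulating Taylor–Green magnetic field. -/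
noncomputable def tgvB2 (x y z : ℝ) : ℝ := -(Real.sin (2*x) * Real.cos (2*y) * Real.sin (2*z))

lemma hasDerivAt_sin_const_mul (a t : ℝ) :
    HasDerivAt (fun s => sin (a * s)) (a * cos (a * t)) t := by
  simpa [mul_comm] using ((hasDerivAt_id t).const_mul a).sin

lemma hasDerivAt_cos_const_mul (a t : ℝ) :
    HasDerivAt (fun s => cos (a * s)) (-(a * sin (a * t))) t := by
  simpa [mul_comm] using ((hasDerivAt_id t).const_mul a).cos

lemma deriv_sin_const_mul (a t : ℝ) : deriv (fun s => sin (a * s)) t = a * cos (a * t) :=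
  (hasDerivAt_sin_const_mul a t).deriv

lemma deriv_cos_const_mul (a t : ℝ) : deriv (fun s => cos (a * s)) t = -(a * sin (a * t)) :=
  (hasDerivAt_cos_const_mul a t).deriv

lemma deriv_deriv_add_mul_cos_add_mul_cos (α β γ a b t : ℝ) :
    deriv (deriv fun s => α + β * cos (a * s) + γ * cos (b * s)) t
      = -(β * a ^ 2 * cos (a * t)) - γ * b ^ 2 * cos (b * t) := by
  have hderiv : deriv (fun s => α + β * cos (a * s) + γ * cos (b * s))
      = fun s => -(β * a) * sin (a * s) - γ * b * sin (b * s) := by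
    funext s
    refine HasDerivAt.deriv ?_
    exact ((((hasDerivAt_cos_const_mul a s).const_mul β).const_add α).add
      ((hasDerivAt_cos_const_mul b s).const_mul γ)).congr_deriv (by ring)
  rw [hderiv]
  exact ((((hasDerivAt_sin_const_mul a t).const_mul (-(β * a))).sub
    ((hasDerivAt_sin_const_mul b t).const_mul (γ * b))).congr_deriv (by ring)).deriv

lemma cos_sq_mul_cos_sq_sub_sin_sq_mul_sin_sq (a b : ℝ) :
    cos a ^ 2 * cos b ^ 2 - sin a ^ 2 * sin b ^ 2 = (cos (2 * a) + cos (2 * b)) / 2 := by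
  rw [cos_sq a, cos_sq b, sin_sq_eq_half_sub a, sin_sq_eq_half_sub b]
  ring

lemma tgvPressure_eq_in_x (C y z : ℝ) :
    (fun x => tgvPressure C x y z)
      = fun x => (C + (1/16) * cos (2*y) * (2 + cos (2*z)) + (1/16) * cos (4*y) * (2 - cos (4*z)))
          + (1/16) * (2 + cos (2*z)) * cos (2 * x) + (1/16) * (2 - cos (4*z)) * cos (4 * x) := by
  funext x
  unfold tgvPressure
  ring

lemma tgvPressure_eq_in_y (C x z : ℝ) :
    (fun y => tgvPressure C x y z)
      = fun y => (C + (1/16) * cos (2*x) * (2 + cos (2*z)) + (1/16) * cos (4*x) * (2 - cos (4*z)))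
          + (1/16) * (2 + cos (2*z)) * cos (2 * y) + (1/16) * (2 - cos (4*z)) * cos (4 * y) := by
  funext y
  unfold tgvPressure
  ring

lemma tgvPressure_eq_in_z (C x y : ℝ) :
    (fun z => tgvPressure C x y z)
      = fun z => (C + (1/8) * (cos (2*x) + cos (2*y)) + (1/8) * (cos (4*x) + cos (4*y)))
          + (1/16) * (cos (2*x) + cos (2*y)) * cos (2 * z)
          + -(1/16) * (cos (4*x) + cos (4*y)) * cos (4 * z) := by
  funext z
  unfold tgvPressure
  ring

lemma tgvPressure_laplacian (C x y z : ℝ) :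
    deriv (fun x' => deriv (fun x'' => tgvPressure C x'' y z) x') x
      + deriv (fun y' => deriv (fun y'' => tgvPressure C x y'' z) y') y
      + deriv (fun z' => deriv (fun z'' => tgvPressure C x y z'') z') z
      = -(cos z)^2 * (cos (2*x) + cos (2*y)) - 4 * (sin (2*z))^2 * (cos (4*x) + cos (4*y)) := by
  rw [tgvPressure_eq_in_x, tgvPressure_eq_in_y, tgvPressure_eq_in_z,
    deriv_deriv_add_mul_cos_add_mul_cos, deriv_deriv_add_mul_cos_add_mul_cos,
    deriv_deriv_add_mul_cos_add_mul_cos, cos_sq z, sin_sq_eq_half_sub (2*z),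
    show 2 * (2 * z) = 4 * z by ring]
  ring

lemma tgv_velocity_gradient_quadratic (x y z : ℝ) :
    (deriv (fun x' => tgvV1 x' y z) x)^2 + (deriv (fun y' => tgvV2 x y' z) y)^2
      + 2 * (deriv (fun x' => tgvV2 x' y z) x) * (deriv (fun y' => tgvV1 x y' z) y)
      = cos z ^ 2 * (cos (2*x) + cos (2*y)) := by
  simp only [tgvV1, tgvV2, deriv_mul_const_field', deriv_const_mul_field', deriv.fun_neg',
    Real.deriv_sin, Real.deriv_cos']
  linear_combination (2 * cos z ^ 2) * cos_sq_mul_cos_sq_sub_sin_sq_mul_sin_sq x y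

lemma tgv_magnetic_gradient_quadratic (x y z : ℝ) :
    (deriv (fun x' => tgvB1 x' y z) x)^2 + (deriv (fun y' => tgvB2 x y' z) y)^2
      + 2 * (deriv (fun x' => tgvB2 x' y z) x) * (deriv (fun y' => tgvB1 x y' z) y)
      = -4 * sin (2*z) ^ 2 * (cos (4*x) + cos (4*y)) := by
  simp only [tgvB1, tgvB2, deriv_mul_const_field', deriv_const_mul_field', deriv.fun_neg',
    deriv_sin_const_mul, deriv_cos_const_mul]
  rw [show 4 * x = 2 * (2 * x) by ring, show 4 * y = 2 * (2 * y) by ring]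
  linear_combination (-8 * sin (2*z) ^ 2) * cos_sq_mul_cos_sq_sub_sin_sq_mul_sin_sq (2*x) (2*y)

/-- **Pressure initial condition for the insulating Taylor–Green vortex** (Appendix C).
The explicit pressure solves `Δp = −cos²z (cos 2x + cos 2y) − 4 sin² 2z (cos 4x + cos 4y)`,
and this right-hand side equals
`−[(∂ₓv₁)² + (∂_yv₂)² + 2(∂ₓv₂)(∂_yv₁)] + [(∂ₓB₁)² + (∂_yB₂)² + 2(∂ₓB₂)(∂_yB₁)]`,
i.e. `p` solves the incompressible pressure Poisson equation for this data. -/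
theorem tgv_pressure_poisson (C : ℝ) : ∀ x y z : ℝ,
    (deriv (fun x' => deriv (fun x'' => tgvPressure C x'' y z) x') x
      + deriv (fun y' => deriv (fun y'' => tgvPressure C x y'' z) y') y
      + deriv (fun z' => deriv (fun z'' => tgvPressure C x y z'') z') z
      = -(Real.cos z)^2 * (Real.cos (2*x) + Real.cos (2*y))
        - 4 * (Real.sin (2*z))^2 * (Real.cos (4*x) + Real.cos (4*y)))
    ∧ (-(Real.cos z)^2 * (Real.cos (2*x) + Real.cos (2*y))
        - 4 * (Real.sin (2*z))^2 * (Real.cos (4*x) + Real.cos (4*y))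
      = -((deriv (fun x' => tgvV1 x' y z) x)^2 + (deriv (fun y' => tgvV2 x y' z) y)^2
            + 2 * (deriv (fun x' => tgvV2 x' y z) x) * (deriv (fun y' => tgvV1 x y' z) y))
        + ((deriv (fun x' => tgvB1 x' y z) x)^2 + (deriv (fun y' => tgvB2 x y' z) y)^2
            + 2 * (deriv (fun x' => tgvB2 x' y z) x) * (deriv (fun y' => tgvB1 x y' z) y))) := by
  intro x y z
  refine ⟨tgvPressure_laplacian C x y z, ?_⟩
  rw [tgv_velocity_gradient_quadratic, tgv_magnetic_gradient_quadratic]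
  ring
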